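/- arXiv:1810.11300 — 3 statements merged into one kernel-verified Lean document; each statement's English description precedes it below -/
import Mathlib

section
/- For an opmonoidal monad (T, τ², τ⁰) on a monoidal category A, the Eilenberg–Moore category A^T carries a monoidal structure with tensor product (X, ξ) ⊗ (Y, υ) = (X ⊗ Y, (ξ ⊗ υ) ∘ τ²_{X,Y}) and unit (I, τ⁰), such that the forgetful functor A^T → A is strict monoidal. -/
open CategoryTheory MonoidalCategory

/-- Auxiliary predicate for STATEMENT 4, expressing that a given monoidal structure on the
Eilenberg–Moore category `A^T` has tensor product `(X,ξ) ⊗ (Y,υ) = (X ⊗ Y, (ξ ⊗ υ) ∘ τ²)`,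
unit `(I, τ⁰)`, and that the forgetful functor is strict monoidal. -/
def Stmt4Conclusion {A : Type*} [Category A] [MonoidalCategory A]
    (T : CategoryTheory.Monad A)
    (τ₂ : ∀ X Y : A, T.obj (X ⊗ Y) ⟶ T.obj X ⊗ T.obj Y) (τ₀ : T.obj (𝟙_ A) ⟶ 𝟙_ A)
    [MonoidalCategory T.Algebra] : Prop :=
  ∃ (hOb : ∀ a b : T.Algebra, (a ⊗ b).A = a.A ⊗ b.A)
    (hU : (𝟙_ T.Algebra).A = 𝟙_ A)
    (hL : ∀ a b c : T.Algebra, ((a ⊗ b) ⊗ c).A = (a.A ⊗ b.A) ⊗ c.A)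
    (hR : ∀ a b c : T.Algebra, (a ⊗ (b ⊗ c)).A = a.A ⊗ (b.A ⊗ c.A))
    (hLU : ∀ a : T.Algebra, ((𝟙_ T.Algebra) ⊗ a).A = 𝟙_ A ⊗ a.A)
    (hRU : ∀ a : T.Algebra, (a ⊗ (𝟙_ T.Algebra)).A = a.A ⊗ 𝟙_ A),
    -- the tensor product of two algebras has the stated structure morphism
    (∀ a b : T.Algebra, (a ⊗ b).a =
      T.map (eqToHom (hOb a b)) ≫ τ₂ a.A b.A ≫ (a.a ⊗ₘ b.a) ≫ eqToHom (hOb a b).symm) ∧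
    -- the monoidal unit is `(I, τ⁰)`
    ((𝟙_ T.Algebra).a = T.map (eqToHom hU) ≫ τ₀ ≫ eqToHom hU.symm) ∧
    -- the forgetful functor is strict monoidal (on tensor products of morphisms and on
    -- the coherence isomorphisms)
    (∀ (a b c d : T.Algebra) (f : a ⟶ c) (g : b ⟶ d),
      (f ⊗ₘ g).f = eqToHom (hOb a b) ≫ (f.f ⊗ₘ g.f) ≫ eqToHom (hOb c d).symm) ∧
    (∀ a b c : T.Algebra,
      (α_ a b c).hom.f = eqToHom (hL a b c) ≫ (α_ a.A b.A c.A).hom ≫ eqToHom (hR a b c).symm) ∧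
    (∀ a : T.Algebra, (λ_ a).hom.f = eqToHom (hLU a) ≫ (λ_ a.A).hom) ∧
    (∀ a : T.Algebra, (ρ_ a).hom.f = eqToHom (hRU a) ≫ (ρ_ a.A).hom)

/-!
The tensor product of two algebras is again an algebra because `τ₂` is compatible with `μ` and
`η`, and `f ⊗ g` is an algebra morphism by naturality of `τ₂`. The associator and unitors of `A`
are algebra morphisms by coassociativity and counitality of `τ₂`. All monoidal data on `T.Algebra`
is then the data of `A` on the carriers, and since algebra morphisms are determined by their
underlying morphisms, every coherence law is inherited from `A`.
-/

namespace CategoryTheory.Monad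

variable {A : Type*} [Category A] [MonoidalCategory A]

structure IsOpmonoidal (T : Monad A) (τ₂ : ∀ X Y : A, T.obj (X ⊗ Y) ⟶ T.obj X ⊗ T.obj Y)
    (τ₀ : T.obj (𝟙_ A) ⟶ 𝟙_ A) : Prop where
  naturality : ∀ {X Y X' Y' : A} (f : X ⟶ X') (g : Y ⟶ Y'),
    T.map (f ⊗ₘ g) ≫ τ₂ X' Y' = τ₂ X Y ≫ (T.map f ⊗ₘ T.map g)
  coassoc : ∀ X Y Z : A,
    τ₂ (X ⊗ Y) Z ≫ (τ₂ X Y ⊗ₘ 𝟙 (T.obj Z)) ≫ (α_ (T.obj X) (T.obj Y) (T.obj Z)).hom =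
      T.map (α_ X Y Z).hom ≫ τ₂ X (Y ⊗ Z) ≫ (𝟙 (T.obj X) ⊗ₘ τ₂ Y Z)
  counit_left : ∀ X : A,
    τ₂ (𝟙_ A) X ≫ (τ₀ ⊗ₘ 𝟙 (T.obj X)) ≫ (λ_ (T.obj X)).hom = T.map (λ_ X).hom
  counit_right : ∀ X : A,
    τ₂ X (𝟙_ A) ≫ (𝟙 (T.obj X) ⊗ₘ τ₀) ≫ (ρ_ (T.obj X)).hom = T.map (ρ_ X).hom
  μ_tensor : ∀ X Y : A, T.μ.app (X ⊗ Y) ≫ τ₂ X Y =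
    T.map (τ₂ X Y) ≫ τ₂ (T.obj X) (T.obj Y) ≫ (T.μ.app X ⊗ₘ T.μ.app Y)
  μ_unit : T.μ.app (𝟙_ A) ≫ τ₀ = T.map τ₀ ≫ τ₀
  η_tensor : ∀ X Y : A, T.η.app (X ⊗ Y) ≫ τ₂ X Y = T.η.app X ⊗ₘ T.η.app Y
  η_unit : T.η.app (𝟙_ A) ≫ τ₀ = 𝟙 (𝟙_ A)

variable {T : Monad A} {τ₂ : ∀ X Y : A, T.obj (X ⊗ Y) ⟶ T.obj X ⊗ T.obj Y}
  {τ₀ : T.obj (𝟙_ A) ⟶ 𝟙_ A}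

theorem map_tensorHom_comp_τ₂_comp_tensorHom
    (naturality : ∀ {X Y X' Y' : A} (f : X ⟶ X') (g : Y ⟶ Y'),
      T.map (f ⊗ₘ g) ≫ τ₂ X' Y' = τ₂ X Y ≫ (T.map f ⊗ₘ T.map g))
    {a b c d : T.Algebra} (f : a ⟶ c) (g : b ⟶ d) :
    T.map (f.f ⊗ₘ g.f) ≫ τ₂ c.A d.A ≫ (c.a ⊗ₘ d.a) =
      (τ₂ a.A b.A ≫ (a.a ⊗ₘ b.a)) ≫ (f.f ⊗ₘ g.f) := by
  rw [reassoc_of% (naturality f.f g.f), tensorHom_comp_tensorHom, f.h, g.h,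
    ← tensorHom_comp_tensorHom, Category.assoc]

namespace IsOpmonoidal

variable (h : IsOpmonoidal T τ₂ τ₀)
include h

-- Reducible, so that `simp` sees the carrier of `a ⊗ b` as `a.A ⊗ b.A` in the final theorem.
abbrev tensorAlgebra (a b : T.Algebra) : T.Algebra where
  A := a.A ⊗ b.A
  a := τ₂ a.A b.A ≫ (a.a ⊗ₘ b.a)
  unit := by
    rw [reassoc_of% (h.η_tensor a.A b.A), tensorHom_comp_tensorHom, a.unit, b.unit,
      id_tensorHom_id]
  assoc := by
    rw [reassoc_of% (h.μ_tensor a.A b.A), tensorHom_comp_tensorHom, a.assoc, b.assoc,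
      ← tensorHom_comp_tensorHom, ← reassoc_of% (h.naturality a.a b.a), ← Functor.map_comp_assoc]

abbrev unitAlgebra : T.Algebra where
  A := 𝟙_ A
  a := τ₀
  unit := h.η_unit
  assoc := h.μ_unit

theorem associator_comm (a b c : T.Algebra) :
    T.map (α_ a.A b.A c.A).hom ≫ (h.tensorAlgebra a (h.tensorAlgebra b c)).a =
      (h.tensorAlgebra (h.tensorAlgebra a b) c).a ≫ (α_ a.A b.A c.A).hom :=
  calc T.map (α_ a.A b.A c.A).hom ≫ τ₂ a.A (b.A ⊗ c.A) ≫ (a.a ⊗ₘ τ₂ b.A c.A ≫ (b.a ⊗ₘ c.a))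
      = T.map (α_ a.A b.A c.A).hom ≫ τ₂ a.A (b.A ⊗ c.A) ≫
          (𝟙 (T.obj a.A) ⊗ₘ τ₂ b.A c.A) ≫ (a.a ⊗ₘ (b.a ⊗ₘ c.a)) := by
        rw [tensorHom_comp_tensorHom, Category.id_comp]
    _ = τ₂ (a.A ⊗ b.A) c.A ≫ (τ₂ a.A b.A ⊗ₘ 𝟙 (T.obj c.A)) ≫
          (α_ (T.obj a.A) (T.obj b.A) (T.obj c.A)).hom ≫ (a.a ⊗ₘ (b.a ⊗ₘ c.a)) := by
        rw [← reassoc_of% (h.coassoc a.A b.A c.A)]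
    _ = τ₂ (a.A ⊗ b.A) c.A ≫ (τ₂ a.A b.A ⊗ₘ 𝟙 (T.obj c.A)) ≫
          ((a.a ⊗ₘ b.a) ⊗ₘ c.a) ≫ (α_ a.A b.A c.A).hom := by
        rw [associator_naturality]
    _ = (τ₂ (a.A ⊗ b.A) c.A ≫ (τ₂ a.A b.A ≫ (a.a ⊗ₘ b.a) ⊗ₘ c.a)) ≫ (α_ a.A b.A c.A).hom := by
        rw [tensorHom_comp_tensorHom_assoc, Category.id_comp, Category.assoc]

theorem leftUnitor_comm (a : T.Algebra) :
    T.map (λ_ a.A).hom ≫ a.a = (h.tensorAlgebra h.unitAlgebra a).a ≫ (λ_ a.A).hom :=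
  calc T.map (λ_ a.A).hom ≫ a.a
      = τ₂ (𝟙_ A) a.A ≫ (τ₀ ⊗ₘ 𝟙 (T.obj a.A)) ≫ (λ_ (T.obj a.A)).hom ≫ a.a := by
        rw [← reassoc_of% (h.counit_left a.A)]
    _ = τ₂ (𝟙_ A) a.A ≫ (τ₀ ⊗ₘ 𝟙 (T.obj a.A)) ≫ (𝟙 (𝟙_ A) ⊗ₘ a.a) ≫ (λ_ a.A).hom := by
        rw [id_tensorHom, leftUnitor_naturality]
    _ = (τ₂ (𝟙_ A) a.A ≫ (τ₀ ⊗ₘ a.a)) ≫ (λ_ a.A).hom := by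
        rw [tensorHom_comp_tensorHom_assoc, Category.comp_id, Category.id_comp, Category.assoc]

theorem rightUnitor_comm (a : T.Algebra) :
    T.map (ρ_ a.A).hom ≫ a.a = (h.tensorAlgebra a h.unitAlgebra).a ≫ (ρ_ a.A).hom :=
  calc T.map (ρ_ a.A).hom ≫ a.a
      = τ₂ a.A (𝟙_ A) ≫ (𝟙 (T.obj a.A) ⊗ₘ τ₀) ≫ (ρ_ (T.obj a.A)).hom ≫ a.a := by
        rw [← reassoc_of% (h.counit_right a.A)]
    _ = τ₂ a.A (𝟙_ A) ≫ (𝟙 (T.obj a.A) ⊗ₘ τ₀) ≫ (a.a ⊗ₘ 𝟙 (𝟙_ A)) ≫ (ρ_ a.A).hom := by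
        rw [tensorHom_id, rightUnitor_naturality]
    _ = (τ₂ a.A (𝟙_ A) ≫ (a.a ⊗ₘ τ₀)) ≫ (ρ_ a.A).hom := by
        rw [tensorHom_comp_tensorHom_assoc, Category.comp_id, Category.id_comp, Category.assoc]

abbrev monoidalCategory : MonoidalCategory T.Algebra where
  tensorObj := h.tensorAlgebra
  tensorHom f g := ⟨f.f ⊗ₘ g.f, map_tensorHom_comp_τ₂_comp_tensorHom h.naturality f g⟩
  whiskerLeft a _ _ g := ⟨a.A ◁ g.f, by
    rw [← id_tensorHom]; exact map_tensorHom_comp_τ₂_comp_tensorHom h.naturality (𝟙 a) g⟩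
  whiskerRight f b := ⟨f.f ▷ b.A, by
    rw [← tensorHom_id]; exact map_tensorHom_comp_τ₂_comp_tensorHom h.naturality f (𝟙 b)⟩
  tensorUnit := h.unitAlgebra
  associator a b c := Algebra.isoMk (α_ a.A b.A c.A) (h.associator_comm a b c)
  leftUnitor a := Algebra.isoMk (λ_ a.A) (h.leftUnitor_comm a)
  rightUnitor a := Algebra.isoMk (ρ_ a.A) (h.rightUnitor_comm a)
  tensorHom_def f g := Algebra.Hom.ext (MonoidalCategory.tensorHom_def f.f g.f)
  id_tensorHom_id a b := Algebra.Hom.ext (MonoidalCategory.id_tensorHom_id a.A b.A)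
  tensorHom_comp_tensorHom f₁ f₂ g₁ g₂ :=
    Algebra.Hom.ext (MonoidalCategory.tensorHom_comp_tensorHom f₁.f f₂.f g₁.f g₂.f)
  whiskerLeft_id a b := Algebra.Hom.ext (MonoidalCategory.whiskerLeft_id a.A b.A)
  id_whiskerRight a b := Algebra.Hom.ext (MonoidalCategory.id_whiskerRight a.A b.A)
  associator_naturality f₁ f₂ f₃ :=
    Algebra.Hom.ext (MonoidalCategory.associator_naturality f₁.f f₂.f f₃.f)
  leftUnitor_naturality f := Algebra.Hom.ext (MonoidalCategory.leftUnitor_naturality f.f)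
  rightUnitor_naturality f := Algebra.Hom.ext (MonoidalCategory.rightUnitor_naturality f.f)
  pentagon a b c d := Algebra.Hom.ext (MonoidalCategory.pentagon a.A b.A c.A d.A)
  triangle a b := Algebra.Hom.ext (MonoidalCategory.triangle a.A b.A)

end IsOpmonoidal

end CategoryTheory.Monad

/-- For an opmonoidal monad `(T, τ², τ⁰)` on a monoidal category `A`, the
Eilenberg–Moore category `A^T` carries a monoidal structure with the stated tensor product
and unit, such that the forgetful functor `A^T ⥤ A` is strict monoidal. -/
theorem stmt_4 {A : Type*} [Category A] [MonoidalCategory A]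
    (T : CategoryTheory.Monad A)
    (τ₂ : ∀ X Y : A, T.obj (X ⊗ Y) ⟶ T.obj X ⊗ T.obj Y)
    (τ₀ : T.obj (𝟙_ A) ⟶ 𝟙_ A)
    (hnat : ∀ {X Y X' Y' : A} (f : X ⟶ X') (g : Y ⟶ Y'),
      T.map (f ⊗ₘ g) ≫ τ₂ X' Y' = τ₂ X Y ≫ (T.map f ⊗ₘ T.map g))
    (hcoassoc : ∀ X Y Z : A,
      τ₂ (X ⊗ Y) Z ≫ (τ₂ X Y ⊗ₘ 𝟙 (T.obj Z)) ≫ (α_ (T.obj X) (T.obj Y) (T.obj Z)).hom =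
        T.map (α_ X Y Z).hom ≫ τ₂ X (Y ⊗ Z) ≫ (𝟙 (T.obj X) ⊗ₘ τ₂ Y Z))
    (hcounit_l : ∀ X : A,
      τ₂ (𝟙_ A) X ≫ (τ₀ ⊗ₘ 𝟙 (T.obj X)) ≫ (λ_ (T.obj X)).hom = T.map (λ_ X).hom)
    (hcounit_r : ∀ X : A,
      τ₂ X (𝟙_ A) ≫ (𝟙 (T.obj X) ⊗ₘ τ₀) ≫ (ρ_ (T.obj X)).hom = T.map (ρ_ X).hom)
    -- the multiplication and unit of the monad are opmonoidal natural transformations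
    (hμ₂ : ∀ X Y : A, T.μ.app (X ⊗ Y) ≫ τ₂ X Y =
        T.map (τ₂ X Y) ≫ τ₂ (T.obj X) (T.obj Y) ≫ (T.μ.app X ⊗ₘ T.μ.app Y))
    (hμ₀ : T.μ.app (𝟙_ A) ≫ τ₀ = T.map τ₀ ≫ τ₀)
    (hη₂ : ∀ X Y : A, T.η.app (X ⊗ Y) ≫ τ₂ X Y = T.η.app X ⊗ₘ T.η.app Y)
    (hη₀ : T.η.app (𝟙_ A) ≫ τ₀ = 𝟙 (𝟙_ A)) :
    ∃ inst : MonoidalCategory T.Algebra, @Stmt4Conclusion A _ _ T τ₂ τ₀ inst := by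
  have h : T.IsOpmonoidal τ₂ τ₀ :=
    ⟨hnat, hcoassoc, hcounit_l, hcounit_r, hμ₂, hμ₀, hη₂, hη₀⟩
  refine ⟨h.monoidalCategory, fun _ _ => rfl, rfl, fun _ _ _ => rfl, fun _ _ _ => rfl,
    fun _ => rfl, fun _ => rfl, ?_, ?_, ?_, ?_, ?_, ?_⟩ <;> intros <;>
    simp only [eqToHom_refl, CategoryTheory.Functor.map_id, Category.comp_id, Category.id_comp] <;> rfl
end

section
/- Let T be a monad on A, S a monad on B, both with Eilenberg–Moore adjunctions, and (h, χ) : (A,T) → (B,S) a monad opfunctor. Suppose the coequalizer π(h,χ) : F^S ∘ h ∘ U^T → V(h,χ) of the reflexive pair F^S h U^T F^T U^T ⇉ F^S h U^T (with maps induced by ε^T and by χ followed by ε^S) exists and is preserved by whiskering. Then precomposing with F^T, one has (π(h,χ) ▷ F^T) : F^S ∘ h ∘ U^T ∘ F^T → V(h,χ) ∘ F^T equal to the composite F^S ∘ h ∘ T → F^S ∘ S ∘ h = F^S ∘ U^S ∘ F^S ∘ h → F^S ∘ h given by χ followed by ε^S; in particular V(h,χ) ∘ F^T ≅ F^S ∘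 h, i.e. V(h,χ) is a lifting of h along the free functors. -/
open CategoryTheory CategoryTheory.Limits

universe w w' v v' u u'

/-!
At a free algebra `F^T X` the Linton pair is `F^S h μ_X, ψ_{T X} : F^S h T T X ⇉ F^S h T X`,
where `ψ := ε^S ∘ F^S χ : F^S h T ⟶ F^S h`. The opfunctor axioms say exactly that `ψ` is a
right `T`-action on `F^S h`, and for any right action the pair is split by `F^S h η` and
`F^S h T η`, with coequalizer `ψ_X`. Comparing it with `π(h,χ)` at `F^T X` gives the
isomorphism `V F^T ≅ F^S h`, natural because each `π_{F^T X}` is epi.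
-/

namespace CategoryTheory

variable {C : Type u} {D : Type u'} [Category.{v} C] [Category.{v'} D]

def Limits.Cofork.IsColimit.swap {X Y Z : C} {f g : X ⟶ Y} {π : Y ⟶ Z} {w : f ≫ π = g ≫ π}
    (hc : IsColimit (Cofork.ofπ π w)) : IsColimit (Cofork.ofπ π w.symm) :=
  Cofork.IsColimit.mk' _ fun s =>
    ⟨Cofork.IsColimit.desc hc s.π s.condition.symm, Cofork.IsColimit.π_desc hc,
      fun hm => Cofork.IsColimit.hom_ext hc (hm.trans (Cofork.IsColimit.π_desc' hc _ _).symm)⟩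

def NatIso.ofComponentsOfEpi {P G H : C ⥤ D} (π : P ⟶ G) [∀ X, Epi (π.app X)] (ψ : P ⟶ H)
    (e : ∀ X, G.obj X ≅ H.obj X) (he : ∀ X, π.app X ≫ (e X).hom = ψ.app X) : G ≅ H :=
  NatIso.ofComponents e fun {X Y} f => by
    rw [← cancel_epi (π.app X), ← π.naturality_assoc, he, reassoc_of% he, ψ.naturality]

namespace Monad

def isSplitCoequalizerOfRightAction (T : Monad C) (M : C ⥤ D) (ρ : T.toFunctor ⋙ M ⟶ M)
    (hassoc : ∀ X, M.map (T.μ.app X) ≫ ρ.app X = ρ.app (T.obj X) ≫ ρ.app X)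
    (hunit : ∀ X, M.map (T.η.app X) ≫ ρ.app X = 𝟙 _) (X : C) :
    IsSplitCoequalizer (ρ.app (T.obj X)) (M.map (T.μ.app X)) (ρ.app X) where
  rightSection := M.map (T.η.app X)
  leftSection := M.map (T.map (T.η.app X))
  condition := (hassoc X).symm
  rightSection_π := hunit X
  leftSection_bottom := by rw [← M.map_comp, T.right_unit]; exact M.map_id _
  leftSection_top := ρ.naturality (T.η.app X)

variable {A : Type u} {B : Type u'} [Category.{v} A] [Category.{v'} B]
  {T : Monad A} {S : Monad B} {h : A ⥤ B}

def freeRightAction (χ : T.toFunctor ⋙ h ⟶ h ⋙ S.toFunctor) :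
    T.toFunctor ⋙ h ⋙ S.free ⟶ h ⋙ S.free where
  app X := S.free.map (χ.app X) ≫ S.adj.counit.app (S.free.obj (h.obj X))
  naturality X Y f := by
    ext
    simp only [Functor.comp_map, Algebra.comp_f, free_map_f, adj_counit, free_obj_a]
    change S.map (h.map (T.map f)) ≫ S.map (χ.app Y) ≫ S.μ.app (h.obj Y) =
      (S.map (χ.app X) ≫ S.μ.app (h.obj X)) ≫ S.map (h.map f)
    have hχ := χ.naturality f
    dsimp at hχ
    rw [← S.map_comp_assoc, hχ, S.map_comp_assoc, Category.assoc, ← S.μ.naturality]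
    rfl

variable {χ : T.toFunctor ⋙ h ⟶ h ⋙ S.toFunctor}

theorem freeRightAction_assoc
    (hmul : ∀ X : A, h.map (T.μ.app X) ≫ χ.app X =
        χ.app (T.obj X) ≫ S.map (χ.app X) ≫ S.μ.app (h.obj X)) (X : A) :
    S.free.map (h.map (T.μ.app X)) ≫ (freeRightAction χ).app X =
      (freeRightAction χ).app (T.obj X) ≫ (freeRightAction χ).app X := by
  ext
  simp only [freeRightAction, Algebra.comp_f, free_map_f, adj_counit, free_obj_a]
  change S.map (h.map (T.μ.app X)) ≫ S.map (χ.app X) ≫ S.μ.app (h.obj X) =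
    (S.map (χ.app (T.obj X)) ≫ S.μ.app (h.obj (T.obj X))) ≫ S.map (χ.app X) ≫ S.μ.app (h.obj X)
  have hμ := S.μ.naturality (χ.app X)
  dsimp at hμ
  rw [← S.map_comp_assoc, hmul, S.map_comp, S.map_comp, Category.assoc, Category.assoc, S.assoc,
    reassoc_of% hμ, Category.assoc]

theorem freeRightAction_unit
    (hunit : ∀ X : A, h.map (T.η.app X) ≫ χ.app X = S.η.app (h.obj X)) (X : A) :
    S.free.map (h.map (T.η.app X)) ≫ (freeRightAction χ).app X = 𝟙 _ := by
  ext
  simp only [freeRightAction, Algebra.comp_f, free_map_f, adj_counit, free_obj_a]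
  change S.map (h.map (T.η.app X)) ≫ S.map (χ.app X) ≫ S.μ.app (h.obj X) = 𝟙 _
  rw [← S.map_comp_assoc, hunit, S.right_unit]
  rfl

end Monad

end CategoryTheory

theorem stmt_8_general {A : Type u} {B : Type u'} [Category.{v} A] [Category.{v'} B]
    (T : CategoryTheory.Monad A) (S : CategoryTheory.Monad B) (h : A ⥤ B)
    (χ : T.toFunctor ⋙ h ⟶ h ⋙ S.toFunctor)
    -- `(h, χ)` is a monad opfunctor
    (hmul : ∀ X : A, h.map (T.μ.app X) ≫ χ.app X =
        χ.app (T.obj X) ≫ S.map (χ.app X) ≫ S.μ.app (h.obj X))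
    (hunit : ∀ X : A, h.map (T.η.app X) ≫ χ.app X = S.η.app (h.obj X))
    -- the Linton coequalizer `π(h,χ)` exists ...
    (V : T.Algebra ⥤ S.Algebra) (π : T.forget ⋙ h ⋙ S.free ⟶ V)
    (hw : ∀ a : T.Algebra,
      S.free.map (h.map a.a) ≫ π.app a =
        (S.free.map (χ.app a.A) ≫ S.adj.counit.app (S.free.obj (h.obj a.A))) ≫ π.app a)
    (hcolim : ∀ a : T.Algebra, Nonempty (IsColimit (Cofork.ofπ (π.app a) (hw a)))) :
    ∃ e : T.free ⋙ V ≅ h ⋙ S.free,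
      ∀ X : A, π.app (T.free.obj X) ≫ e.hom.app X =
        S.free.map (χ.app X) ≫ S.adj.counit.app (S.free.obj (h.obj X)) := by
  let ψ := Monad.freeRightAction χ
  have hψ (X : A) : IsColimit (Cofork.ofπ (ψ.app X) (Monad.freeRightAction_assoc hmul X)) :=
    Cofork.IsColimit.swap (Monad.isSplitCoequalizerOfRightAction T (h ⋙ S.free) ψ
      (Monad.freeRightAction_assoc hmul) (Monad.freeRightAction_unit hunit) X).isCoequalizer
  let e (X : A) := (hcolim (T.free.obj X)).some.coconePointUniqueUpToIso (hψ X)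
  have he (X : A) : π.app (T.free.obj X) ≫ (e X).hom = ψ.app X :=
    IsColimit.comp_coconePointUniqueUpToIso_hom (hcolim (T.free.obj X)).some (hψ X)
      WalkingParallelPair.one
  have (X : A) : Epi ((Functor.whiskerLeft T.free π).app X) :=
    Cofork.IsColimit.epi (hcolim (T.free.obj X)).some
  exact ⟨NatIso.ofComponentsOfEpi (Functor.whiskerLeft T.free π) ψ e he, he⟩

/-- Given a monad opfunctor `(h, χ) : (A,T) → (B,S)` and the Linton coequalizer
`π(h,χ) : F^S ∘ h ∘ U^T ⟶ V(h,χ)` of the reflexive pair (assumed to exist and be preserved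
by whiskering), precomposing with `F^T` yields the composite
`F^S ∘ h ∘ T → F^S ∘ S ∘ h = F^S ∘ U^S ∘ F^S ∘ h → F^S ∘ h` given by `χ` followed by `ε^S`;
in particular `V(h,χ) ∘ F^T ≅ F^S ∘ h`, i.e. `V(h,χ)` is a lifting of `h` along the free
functors. -/
theorem stmt_8 {A : Type u} {B : Type u'} [Category.{v} A] [Category.{v'} B]
    (T : CategoryTheory.Monad A) (S : CategoryTheory.Monad B) (h : A ⥤ B)
    (χ : T.toFunctor ⋙ h ⟶ h ⋙ S.toFunctor)
    -- `(h, χ)` is a monad opfunctor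
    (hmul : ∀ X : A, h.map (T.μ.app X) ≫ χ.app X =
        χ.app (T.obj X) ≫ S.map (χ.app X) ≫ S.μ.app (h.obj X))
    (hunit : ∀ X : A, h.map (T.η.app X) ≫ χ.app X = S.η.app (h.obj X))
    -- the Linton coequalizer `π(h,χ)` exists ...
    (V : T.Algebra ⥤ S.Algebra) (π : T.forget ⋙ h ⋙ S.free ⟶ V)
    (hw : ∀ a : T.Algebra,
      S.free.map (h.map a.a) ≫ π.app a =
        (S.free.map (χ.app a.A) ≫ S.adj.counit.app (S.free.obj (h.obj a.A))) ≫ π.app a)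
    (hcolim : ∀ a : T.Algebra, Nonempty (IsColimit (Cofork.ofπ (π.app a) (hw a))))
    -- ... and is preserved by (horizontal composition with any 1-cell, in particular by)
    -- any functor out of `B^S`
    (hpres : ∀ {E : Type w} [Category.{w'} E] (K : S.Algebra ⥤ E) (a : T.Algebra),
      Nonempty (IsColimit (K.mapCocone (Cofork.ofπ (π.app a) (hw a))))) :
    ∃ e : T.free ⋙ V ≅ h ⋙ S.free,
      ∀ X : A, π.app (T.free.obj X) ≫ e.hom.app X =
        S.free.map (χ.app X) ≫ S.adj.counit.app (S.free.obj (h.obj X)) :=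
  stmt_8_general T S h χ hmul hunit V π hw hcolim
end

section
/- Suppose the 2-category M admits Eilenberg–Moore construction and the Linton-type reflexive coequalizers π(g,Γ) : f^v.g.u^z → V(g,Γ) exist for all monad opfunctors and are preserved by horizontal composition. Then for every 2-cell ω : (h,Ξ) → (k,Θ) over vertical 1-cells (n,Φ), (g,Γ) in the double category Mnd(M) of monads, there exists a unique 2-cell Kω : V(g,Γ) ∘ H(h,Ξ) → H(k,Θ) ∘ V(n,Φ) in M such that Kω ∘ (π(g,Γ) ▷ H(h,Ξ)) equals the composite f^v.g.u^z.H(h,Ξ) = f^v.g.h.u^t → f^v.k.n.u^t → H(k,Θ).f^s.n.u^t → H(k,Θ).V(n,Φ) built from ω, HΘ, and π(n,Φ). -/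
open CategoryTheory CategoryTheory.Limits

universe w w' v₁ v₂ v₃ v₄ u₁ u₂ u₃ u₄

/-!
Every component of `π(g,Γ)` is a coequalizer, so a 2-cell out of `V(g,Γ) ∘ H(h,Ξ)` amounts to a
natural family out of `f^v.g.u^z.H(h,Ξ)` that coequalizes each Linton pair; naturality of the
induced family is inherited because the coequalizing maps are epimorphisms. The composite of `ω`,
`HΘ` and `π(n,Φ)` is natural, being a composite of whiskerings, and it coequalizes the pair:
transposed along the free–forgetful adjunction of `v`, the two legs at an algebra `(X, α)` become
`g Ξ ; g h α ; ω ; k η ; k π` and `Γ ; v ω ; Θ ; k π` (using the unit law of `Θ`), and these agree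
by naturality of `ω`, the transposed Linton relation `n α ; η ; π = Φ ; π`, and the 2-cell
axiom of `ω`.
-/

namespace CategoryTheory

theorem Adjunction.map_comp_eq_map_comp_counit_comp_iff {C D : Type*} [Category C] [Category D]
    {F : C ⥤ D} {G : D ⥤ C} (adj : F ⊣ G) {X' X : C} {Y : D} (x : X' ⟶ X)
    (y : X' ⟶ G.obj (F.obj X)) (q : F.obj X ⟶ Y) :
    F.map x ≫ q = (F.map y ≫ adj.counit.app (F.obj X)) ≫ q ↔
      x ≫ adj.homEquiv X Y q = y ≫ G.map q := by
  rw [← (adj.homEquiv X' Y).apply_eq_iff_eq, Category.assoc, adj.homEquiv_naturality_left,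
    adj.homEquiv_naturality_left, adj.homEquiv_unit (f := adj.counit.app _ ≫ q)]
  simp

theorem NatTrans.existsUnique_of_isColimit_cofork {C D : Type*} [Category C] [Category D]
    {P F G : C ⥤ D} {X : C → D} (l r : ∀ c, X c ⟶ P.obj c) (π : P ⟶ F)
    (w : ∀ c, l c ≫ π.app c = r c ≫ π.app c)
    (hπ : ∀ c, Nonempty (IsColimit (Cofork.ofπ (π.app c) (w c))))
    (q : P ⟶ G) (hq : ∀ c, l c ≫ q.app c = r c ≫ q.app c) :
    ∃! K : F ⟶ G, ∀ c, π.app c ≫ K.app c = q.app c := by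
  have hπ c := (hπ c).some
  have hdesc c : π.app c ≫ Cofork.IsColimit.desc (hπ c) (q.app c) (hq c) = q.app c :=
    Cofork.IsColimit.π_desc' (hπ c) (q.app c) (hq c)
  refine ⟨{ app c := Cofork.IsColimit.desc (hπ c) (q.app c) (hq c), naturality a b m := ?_ },
    hdesc, fun K hK => ?_⟩
  · apply Cofork.IsColimit.hom_ext (hπ a)
    simp only [Cofork.π_ofπ, ← π.naturality_assoc, hdesc, reassoc_of% hdesc, q.naturality]
  · ext c
    apply Cofork.IsColimit.hom_ext (hπ c)
    simp only [Cofork.π_ofπ, hK, hdesc]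

namespace Monad

theorem free_map_comp_eq_free_map_comp_counit_comp_iff {C : Type*} [Category C] (T : Monad C)
    {X' X : C} {Y : T.Algebra} (x : X' ⟶ X) (y : X' ⟶ T.obj X) (q : T.free.obj X ⟶ Y) :
    T.free.map x ≫ q = (T.free.map y ≫ T.adj.counit.app (T.free.obj X)) ≫ q ↔
      x ≫ T.η.app X ≫ q.f = y ≫ q.f := by
  refine (T.adj.map_comp_eq_map_comp_counit_comp_iff x y q).trans ?_
  rw [Adjunction.homEquiv_unit, Monad.adj_unit]
  rfl

section StrictLift

variable {B D : Type*} [Category B] [Category D] {s : Monad B} {v : Monad D} {k : B ⥤ D}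
  {Hk : s.Algebra ⥤ v.Algebra}

theorem map_f_eq_of_comp_forget_eq (hHk : Hk ⋙ v.forget = s.forget ⋙ k) {a b : s.Algebra}
    (m : a ⟶ b) :
    (Hk.map m).f = eqToHom (Functor.congr_obj hHk a) ≫ k.map m.f ≫
      eqToHom (Functor.congr_obj hHk b).symm := by
  have := Functor.congr_hom hHk m
  simp only [Functor.comp_map, Monad.forget_map] at this
  exact this

/-- The 2-cell `HΘ : f^v.k → H(k,Θ).f^s`. -/
def liftComparison (hHk : Hk ⋙ v.forget = s.forget ⋙ k) : k ⋙ v.free ⟶ s.free ⋙ Hk :=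
  ((mateEquiv s.adj v.adj).symm (TwoSquare.mk _ _ _ _ (eqToHom hHk.symm))).natTrans

theorem liftComparison_app (hHk : Hk ⋙ v.forget = s.forget ⋙ k) (N : B) :
    (liftComparison hHk).app N = (v.adj.homEquiv _ _).symm
      (k.map (s.η.app N) ≫ eqToHom (Functor.congr_obj hHk (s.free.obj N)).symm) := by
  ext
  simp only [Functor.comp_obj, liftComparison, mateEquiv_symm_apply, adj_unit, adj_counit,
    NatTrans.comp_app, Functor.id_obj, Functor.leftUnitor_inv_app, Functor.whiskerRight_app,
    Functor.associator_inv_app, Functor.associator_hom_app, Functor.map_id,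
    Functor.whiskerLeft_app, eqToHom_app, Functor.rightUnitor_hom_app, Category.id_comp,
    Algebra.comp_f, free_map_f, Adjunction.homEquiv_counit, Functor.map_comp]
  erw [Monad.Algebra.comp_f, Monad.Algebra.comp_f, Monad.Algebra.comp_f, Category.comp_id]
  exact (Category.assoc _ _ _).symm

theorem liftComparison_app_f (hHk : Hk ⋙ v.forget = s.forget ⋙ k)
    (Θ : k ⋙ v.toFunctor ⟶ s.toFunctor ⋙ k)
    (hHk2 : ∀ a : s.Algebra, (Hk.obj a).a =
        v.map (eqToHom (Functor.congr_obj hHk a)) ≫ Θ.app a.A ≫ k.map a.a ≫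
          eqToHom (Functor.congr_obj hHk a).symm) (N : B) :
    ((liftComparison hHk).app N).f =
      Θ.app N ≫ eqToHom (Functor.congr_obj hHk (s.free.obj N)).symm := by
  rw [liftComparison_app]
  simp only [Adjunction.homEquiv_counit, Monad.Algebra.comp_f]
  rw [show (v.adj.counit.app (Hk.obj (s.free.obj N))).f = (Hk.obj (s.free.obj N)).a by
    simp only [Functor.comp_obj, Functor.id_obj, adj_counit]; rfl]
  -- Generalizing the carrier of `Hk.obj (s.free.obj N)` turns the `eqToHom`s into identities.
  have key : ∀ (P : D) (e : P = k.obj (s.obj N)) (a : v.obj P ⟶ P),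
      a = v.map (eqToHom e) ≫ Θ.app (s.obj N) ≫ k.map (s.μ.app N) ≫ eqToHom e.symm →
      v.map (k.map (s.η.app N) ≫ eqToHom e.symm) ≫ a = Θ.app N ≫ eqToHom e.symm := by
    rintro P rfl a rfl
    simp only [eqToHom_refl, Category.comp_id, Functor.map_id, Category.id_comp]
    rw [reassoc_of% (Θ.naturality (s.η.app N)), ← k.map_comp]
    simp
  exact key _ (Functor.congr_obj hHk (s.free.obj N)) _ (hHk2 (s.free.obj N))

end StrictLift

end Monad

section DoubleCell

variable {A B C D : Type*} [Category A] [Category B] [Category C] [Category D]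
  {t : Monad A} {s : Monad B} {z : Monad C} {v : Monad D}
  {h : A ⥤ C} {k : B ⥤ D} {n : A ⥤ B} {g : C ⥤ D}

theorem cell_pasting (Ξ : h ⋙ z.toFunctor ⟶ t.toFunctor ⋙ h)
    (Θ : k ⋙ v.toFunctor ⟶ s.toFunctor ⋙ k) (Φ : t.toFunctor ⋙ n ⟶ n ⋙ s.toFunctor)
    (Γ : z.toFunctor ⋙ g ⟶ g ⋙ v.toFunctor) (ω : h ⋙ g ⟶ n ⋙ k) {X : A}
    (hω : g.map (Ξ.app X) ≫ ω.app (t.obj X) ≫ k.map (Φ.app X) =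
      Γ.app (h.obj X) ≫ v.map (ω.app X) ≫ Θ.app (n.obj X))
    (α : t.obj X ⟶ X) {Y : B} (p : s.obj (n.obj X) ⟶ Y)
    (hp : n.map α ≫ s.η.app (n.obj X) ≫ p = Φ.app X ≫ p) :
    g.map (Ξ.app X) ≫ g.map (h.map α) ≫ ω.app X ≫ k.map (s.η.app (n.obj X)) ≫ k.map p =
      Γ.app (h.obj X) ≫ v.map (ω.app X) ≫ Θ.app (n.obj X) ≫ k.map p := by
  have hωα : g.map (h.map α) ≫ ω.app X = ω.app (t.obj X) ≫ k.map (n.map α) := ω.naturality α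
  have hkp := congrArg k.map hp
  simp only [Functor.map_comp] at hkp
  rw [reassoc_of% hωα, hkp, reassoc_of% hω]

variable {Hh : t.Algebra ⥤ z.Algebra} {Hk : s.Algebra ⥤ v.Algebra} {Vn : t.Algebra ⥤ s.Algebra}

/-- The composite `f^v.g.u^z.H(h,Ξ) = f^v.g.h.u^t → f^v.k.n.u^t → H(k,Θ).f^s.n.u^t →
H(k,Θ).V(n,Φ)` of `ω`, `HΘ` and `π(n,Φ)`. -/
def compositeCell (hHh : Hh ⋙ z.forget = t.forget ⋙ h) (ω : h ⋙ g ⟶ n ⋙ k)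
    (hHk : Hk ⋙ v.forget = s.forget ⋙ k) (πn : t.forget ⋙ n ⋙ s.free ⟶ Vn) :
    Hh ⋙ z.forget ⋙ g ⋙ v.free ⟶ Vn ⋙ Hk :=
  Functor.whiskerRight (eqToHom hHh) (g ⋙ v.free) ≫
    Functor.whiskerLeft t.forget (Functor.whiskerRight ω v.free) ≫
    Functor.whiskerLeft (t.forget ⋙ n) (Monad.liftComparison hHk) ≫ Functor.whiskerRight πn Hk

theorem compositeCell_app (hHh : Hh ⋙ z.forget = t.forget ⋙ h) (ω : h ⋙ g ⟶ n ⋙ k)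
    (hHk : Hk ⋙ v.forget = s.forget ⋙ k) (πn : t.forget ⋙ n ⋙ s.free ⟶ Vn) (a : t.Algebra) :
    (compositeCell hHh ω hHk πn).app a =
      v.free.map (g.map (eqToHom (Functor.congr_obj hHh a))) ≫ v.free.map (ω.app a.A) ≫
        (Monad.liftComparison hHk).app (n.obj a.A) ≫ Hk.map (πn.app a) := by
  simp only [compositeCell, NatTrans.comp_app, Functor.whiskerRight_app, eqToHom_app,
    Functor.comp_map, Functor.whiskerLeft_app]
  rfl

theorem compositeCell_coequalizes (Ξ : h ⋙ z.toFunctor ⟶ t.toFunctor ⋙ h)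
    (Θ : k ⋙ v.toFunctor ⟶ s.toFunctor ⋙ k)
    (hΘunit : ∀ X : B, v.η.app (k.obj X) ≫ Θ.app X = k.map (s.η.app X))
    (Φ : t.toFunctor ⋙ n ⟶ n ⋙ s.toFunctor)
    (Γ : z.toFunctor ⋙ g ⟶ g ⋙ v.toFunctor) (ω : h ⋙ g ⟶ n ⋙ k)
    (hω : ∀ X : A, g.map (Ξ.app X) ≫ ω.app (t.obj X) ≫ k.map (Φ.app X) =
        Γ.app (h.obj X) ≫ v.map (ω.app X) ≫ Θ.app (n.obj X))
    (hHh : Hh ⋙ z.forget = t.forget ⋙ h)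
    (hHh2 : ∀ a : t.Algebra, (Hh.obj a).a =
        z.map (eqToHom (Functor.congr_obj hHh a)) ≫ Ξ.app a.A ≫ h.map a.a ≫
          eqToHom (Functor.congr_obj hHh a).symm)
    (hHk : Hk ⋙ v.forget = s.forget ⋙ k)
    (hHk2 : ∀ a : s.Algebra, (Hk.obj a).a =
        v.map (eqToHom (Functor.congr_obj hHk a)) ≫ Θ.app a.A ≫ k.map a.a ≫
          eqToHom (Functor.congr_obj hHk a).symm)
    (πn : t.forget ⋙ n ⋙ s.free ⟶ Vn)
    (hwn : ∀ a : t.Algebra,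
      s.free.map (n.map a.a) ≫ πn.app a =
        (s.free.map (Φ.app a.A) ≫ s.adj.counit.app (s.free.obj (n.obj a.A))) ≫ πn.app a)
    (a : t.Algebra) :
    v.free.map (g.map (Hh.obj a).a) ≫ (compositeCell hHh ω hHk πn).app a =
      (v.free.map (Γ.app (Hh.obj a).A) ≫ v.adj.counit.app (v.free.obj (g.obj (Hh.obj a).A))) ≫
        (compositeCell hHh ω hHk πn).app a := by
  have hp := (s.free_map_comp_eq_free_map_comp_counit_comp_iff _ _ _).1 (hwn a)
  refine (v.free_map_comp_eq_free_map_comp_counit_comp_iff _ _ _).2 ?_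
  rw [compositeCell_app]
  have key : ∀ (P : C) (eP : P = h.obj a.A) (α' : z.obj P ⟶ P) (u : P ⟶ h.obj a.A) (QF QV : D)
      (eF : QF = k.obj (s.obj (n.obj a.A))) (eV : QV = k.obj (Vn.obj a).A)
      (φf : v.obj (k.obj (n.obj a.A)) ⟶ QF) (ρ : QF ⟶ QV),
      α' = z.map (eqToHom eP) ≫ Ξ.app a.A ≫ h.map a.a ≫ eqToHom eP.symm → u = eqToHom eP →
      φf = Θ.app _ ≫ eqToHom eF.symm → ρ = eqToHom eF ≫ k.map (πn.app a).f ≫ eqToHom eV.symm →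
      g.map α' ≫ v.η.app _ ≫ v.map (g.map u) ≫ v.map (ω.app a.A) ≫ φf ≫ ρ =
        Γ.app P ≫ v.map (g.map u) ≫ v.map (ω.app a.A) ≫ φf ≫ ρ := by
    rintro P rfl _ _ QF QV rfl rfl _ _ rfl rfl rfl rfl
    have hηω : v.η.app (g.obj (h.obj a.A)) ≫ v.map (ω.app a.A) =
        ω.app a.A ≫ v.η.app (k.obj (n.obj a.A)) := (v.η.naturality (ω.app a.A)).symm
    simp only [eqToHom_refl, Category.comp_id, Category.id_comp, Functor.map_id, Functor.map_comp,
      Category.assoc]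
    have hηΘ := hΘunit (n.obj a.A)
    rw [reassoc_of% hηω, reassoc_of% hηΘ]
    simpa only [Functor.comp_obj, Category.id_comp] using cell_pasting Ξ Θ Φ Γ ω (hω a.A) a.a _ hp
  exact key _ (Functor.congr_obj hHh a) _ _ _ _ (Functor.congr_obj hHk (s.free.obj _))
    (Functor.congr_obj hHk (Vn.obj a)) _ _ (hHh2 a) rfl (Monad.liftComparison_app_f hHk Θ hHk2 _)
    (Monad.map_f_eq_of_comp_forget_eq hHk _)

end DoubleCell

end CategoryTheory

theorem stmt_15_general
    {A : Type u₁} {B : Type u₂} {C : Type u₃} {D : Type u₄}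
    [Category.{v₁} A] [Category.{v₂} B] [Category.{v₃} C] [Category.{v₄} D]
    (t : CategoryTheory.Monad A) (s : CategoryTheory.Monad B)
    (z : CategoryTheory.Monad C) (v : CategoryTheory.Monad D)
    -- the horizontal 1-cells: monad functors `(h,Ξ) : (A,t) → (C,z)`, `(k,Θ) : (B,s) → (D,v)`
    (h : A ⥤ C) (Ξ : h ⋙ z.toFunctor ⟶ t.toFunctor ⋙ h)
    (k : B ⥤ D) (Θ : k ⋙ v.toFunctor ⟶ s.toFunctor ⋙ k)
    (hΘunit : ∀ X : B, v.η.app (k.obj X) ≫ Θ.app X = k.map (s.η.app X))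
    -- the vertical 1-cells: monad opfunctors `(n,Φ) : (A,t) → (B,s)`, `(g,Γ) : (C,z) → (D,v)`
    (n : A ⥤ B) (Φ : t.toFunctor ⋙ n ⟶ n ⋙ s.toFunctor)
    (g : C ⥤ D) (Γ : z.toFunctor ⋙ g ⟶ g ⋙ v.toFunctor)
    -- the 2-cell `ω` of the double category of monads
    (ω : h ⋙ g ⟶ n ⋙ k)
    (hω : ∀ X : A, g.map (Ξ.app X) ≫ ω.app (t.obj X) ≫ k.map (Φ.app X) =
        Γ.app (h.obj X) ≫ v.map (ω.app X) ≫ Θ.app (n.obj X))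
    -- the Eilenberg–Moore liftings `H(h,Ξ)` and `H(k,Θ)`
    (Hh : t.Algebra ⥤ z.Algebra) (hHh : Hh ⋙ z.forget = t.forget ⋙ h)
    (hHh2 : ∀ a : t.Algebra, (Hh.obj a).a =
        z.map (eqToHom (Functor.congr_obj hHh a)) ≫ Ξ.app a.A ≫ h.map a.a ≫
          eqToHom (Functor.congr_obj hHh a).symm)
    (Hk : s.Algebra ⥤ v.Algebra) (hHk : Hk ⋙ v.forget = s.forget ⋙ k)
    (hHk2 : ∀ a : s.Algebra, (Hk.obj a).a =
        v.map (eqToHom (Functor.congr_obj hHk a)) ≫ Θ.app a.A ≫ k.map a.a ≫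
          eqToHom (Functor.congr_obj hHk a).symm)
    -- the Linton coequalizers `V(g,Γ)` and `V(n,Φ)`, preserved by horizontal composition
    (Vg : z.Algebra ⥤ v.Algebra) (πg : z.forget ⋙ g ⋙ v.free ⟶ Vg)
    (hwg : ∀ c : z.Algebra,
      v.free.map (g.map c.a) ≫ πg.app c =
        (v.free.map (Γ.app c.A) ≫ v.adj.counit.app (v.free.obj (g.obj c.A))) ≫ πg.app c)
    (hcolimg : ∀ c : z.Algebra, Nonempty (IsColimit (Cofork.ofπ (πg.app c) (hwg c))))
    (Vn : t.Algebra ⥤ s.Algebra) (πn : t.forget ⋙ n ⋙ s.free ⟶ Vn)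
    (hwn : ∀ a : t.Algebra,
      s.free.map (n.map a.a) ≫ πn.app a =
        (s.free.map (Φ.app a.A) ≫ s.adj.counit.app (s.free.obj (n.obj a.A))) ≫ πn.app a) :
    -- the unique 2-cell `Kω`
    ∃! Kω : Hh ⋙ Vg ⟶ Vn ⋙ Hk,
      ∀ a : t.Algebra,
        πg.app (Hh.obj a) ≫ Kω.app a =
          v.free.map (g.map (eqToHom (Functor.congr_obj hHh a))) ≫
            v.free.map (ω.app a.A) ≫
            (v.adj.homEquiv (k.obj (n.obj a.A)) (Hk.obj (s.free.obj (n.obj a.A)))).symm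
              (k.map (s.η.app (n.obj a.A)) ≫
                eqToHom (Functor.congr_obj hHk (s.free.obj (n.obj a.A))).symm) ≫
            Hk.map (πn.app a) := by
  have hK := NatTrans.existsUnique_of_isColimit_cofork _ _ (Functor.whiskerLeft Hh πg)
    (fun a => hwg (Hh.obj a)) (fun a => hcolimg (Hh.obj a)) (compositeCell hHh ω hHk πn)
    (compositeCell_coequalizes Ξ Θ hΘunit Φ Γ ω hω hHh hHh2 hHk hHk2 πn hwn)
  simp only [Functor.whiskerLeft_app, compositeCell_app, Monad.liftComparison_app] at hK
  exact hK

/-- Suppose the ambient 2-category (here: of categories) admits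
Eilenberg–Moore construction and the Linton type reflexive coequalizers
`π(g,Γ) : f^v ∘ g ∘ u^z ⟶ V(g,Γ)` exist for all monad opfunctors and are preserved by
horizontal composition.  Then for every 2-cell `ω : (h,Ξ) → (k,Θ)` over vertical 1-cells
`(n,Φ)`, `(g,Γ)` in the double category of monads, there exists a unique 2-cell
`Kω : V(g,Γ) ∘ H(h,Ξ) ⟶ H(k,Θ) ∘ V(n,Φ)` such that `Kω ∘ (π(g,Γ) ▷ H(h,Ξ))` equals the
composite built from `ω`, `HΘ` and `π(n,Φ)`. -/
theorem stmt_15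
    {A : Type u₁} {B : Type u₂} {C : Type u₃} {D : Type u₄}
    [Category.{v₁} A] [Category.{v₂} B] [Category.{v₃} C] [Category.{v₄} D]
    (t : CategoryTheory.Monad A) (s : CategoryTheory.Monad B)
    (z : CategoryTheory.Monad C) (v : CategoryTheory.Monad D)
    -- the horizontal 1-cells: monad functors `(h,Ξ) : (A,t) → (C,z)`, `(k,Θ) : (B,s) → (D,v)`
    (h : A ⥤ C) (Ξ : h ⋙ z.toFunctor ⟶ t.toFunctor ⋙ h)
    (hΞmul : ∀ X : A, z.μ.app (h.obj X) ≫ Ξ.app X =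
        z.map (Ξ.app X) ≫ Ξ.app (t.obj X) ≫ h.map (t.μ.app X))
    (hΞunit : ∀ X : A, z.η.app (h.obj X) ≫ Ξ.app X = h.map (t.η.app X))
    (k : B ⥤ D) (Θ : k ⋙ v.toFunctor ⟶ s.toFunctor ⋙ k)
    (hΘmul : ∀ X : B, v.μ.app (k.obj X) ≫ Θ.app X =
        v.map (Θ.app X) ≫ Θ.app (s.obj X) ≫ k.map (s.μ.app X))
    (hΘunit : ∀ X : B, v.η.app (k.obj X) ≫ Θ.app X = k.map (s.η.app X))
    -- the vertical 1-cells: monad opfunctors `(n,Φ) : (A,t) → (B,s)`, `(g,Γ) : (C,z) → (D,v)`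
    (n : A ⥤ B) (Φ : t.toFunctor ⋙ n ⟶ n ⋙ s.toFunctor)
    (hΦmul : ∀ X : A, n.map (t.μ.app X) ≫ Φ.app X =
        Φ.app (t.obj X) ≫ s.map (Φ.app X) ≫ s.μ.app (n.obj X))
    (hΦunit : ∀ X : A, n.map (t.η.app X) ≫ Φ.app X = s.η.app (n.obj X))
    (g : C ⥤ D) (Γ : z.toFunctor ⋙ g ⟶ g ⋙ v.toFunctor)
    (hΓmul : ∀ X : C, g.map (z.μ.app X) ≫ Γ.app X =
        Γ.app (z.obj X) ≫ v.map (Γ.app X) ≫ v.μ.app (g.obj X))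
    (hΓunit : ∀ X : C, g.map (z.η.app X) ≫ Γ.app X = v.η.app (g.obj X))
    -- the 2-cell `ω` of the double category of monads
    (ω : h ⋙ g ⟶ n ⋙ k)
    (hω : ∀ X : A, g.map (Ξ.app X) ≫ ω.app (t.obj X) ≫ k.map (Φ.app X) =
        Γ.app (h.obj X) ≫ v.map (ω.app X) ≫ Θ.app (n.obj X))
    -- the Eilenberg–Moore liftings `H(h,Ξ)` and `H(k,Θ)`
    (Hh : t.Algebra ⥤ z.Algebra) (hHh : Hh ⋙ z.forget = t.forget ⋙ h)
    (hHh2 : ∀ a : t.Algebra, (Hh.obj a).a =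
        z.map (eqToHom (Functor.congr_obj hHh a)) ≫ Ξ.app a.A ≫ h.map a.a ≫
          eqToHom (Functor.congr_obj hHh a).symm)
    (Hk : s.Algebra ⥤ v.Algebra) (hHk : Hk ⋙ v.forget = s.forget ⋙ k)
    (hHk2 : ∀ a : s.Algebra, (Hk.obj a).a =
        v.map (eqToHom (Functor.congr_obj hHk a)) ≫ Θ.app a.A ≫ k.map a.a ≫
          eqToHom (Functor.congr_obj hHk a).symm)
    -- the Linton coequalizers `V(g,Γ)` and `V(n,Φ)`, preserved by horizontal composition
    (Vg : z.Algebra ⥤ v.Algebra) (πg : z.forget ⋙ g ⋙ v.free ⟶ Vg)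
    (hwg : ∀ c : z.Algebra,
      v.free.map (g.map c.a) ≫ πg.app c =
        (v.free.map (Γ.app c.A) ≫ v.adj.counit.app (v.free.obj (g.obj c.A))) ≫ πg.app c)
    (hcolimg : ∀ c : z.Algebra, Nonempty (IsColimit (Cofork.ofπ (πg.app c) (hwg c))))
    (hpresg : ∀ {E : Type w} [Category.{w'} E] (K : v.Algebra ⥤ E) (c : z.Algebra),
      Nonempty (IsColimit (K.mapCocone (Cofork.ofπ (πg.app c) (hwg c)))))
    (Vn : t.Algebra ⥤ s.Algebra) (πn : t.forget ⋙ n ⋙ s.free ⟶ Vn)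
    (hwn : ∀ a : t.Algebra,
      s.free.map (n.map a.a) ≫ πn.app a =
        (s.free.map (Φ.app a.A) ≫ s.adj.counit.app (s.free.obj (n.obj a.A))) ≫ πn.app a)
    (hcolimn : ∀ a : t.Algebra, Nonempty (IsColimit (Cofork.ofπ (πn.app a) (hwn a))))
    (hpresn : ∀ {E : Type w} [Category.{w'} E] (K : s.Algebra ⥤ E) (a : t.Algebra),
      Nonempty (IsColimit (K.mapCocone (Cofork.ofπ (πn.app a) (hwn a))))) :
    -- the unique 2-cell `Kω`
    ∃! Kω : Hh ⋙ Vg ⟶ Vn ⋙ Hk,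
      ∀ a : t.Algebra,
        πg.app (Hh.obj a) ≫ Kω.app a =
          v.free.map (g.map (eqToHom (Functor.congr_obj hHh a))) ≫
            v.free.map (ω.app a.A) ≫
            (v.adj.homEquiv (k.obj (n.obj a.A)) (Hk.obj (s.free.obj (n.obj a.A)))).symm
              (k.map (s.η.app (n.obj a.A)) ≫
                eqToHom (Functor.congr_obj hHk (s.free.obj (n.obj a.A))).symm) ≫
            Hk.map (πn.app a) :=
  stmt_15_general t s z v h Ξ k Θ hΘunit n Φ g Γ ω hω Hh hHh hHh2 Hk hHk hHk2 Vg πg hwg hcolimg Vn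
    πn hwn
end
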